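/- For every α > 0, the function f : [0,1] → [0,∞] defined by f(x) := α^{-1}(1+α)^{-α} · x · (ln(1/x))^{1+α} for x ≤ e^{-1-α} and f(x) := ∞ for x > e^{-1-α} is an admissible calibrator; in particular, for every probability space (Ω, F, P) and every p-test p on it, ∫ (1/f(p)) dP ≤ 1, and ∫₀¹ (1/f(x)) dx = 1. -/

import Mathlib

open MeasureTheory ENNReal

/-- The calibrator `f(x) = α⁻¹ (1+α)^{-α} x ln^{1+α}(1/x)` for `x ≤ e^{-1-α}`,
and `f(x) = ∞` otherwise. -/
noncomputable def logCalibrator (α : ℝ) : ℝ → ℝ≥0∞ := fun x =>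
  if x ≤ Real.exp (-(1 + α)) then
    ENNReal.ofReal (α⁻¹ * (1 + α) ^ (-α) * x * (Real.log (1 / x)) ^ (1 + α))
  else ∞

/-!
On `(0, e^{-1-α}]` the reciprocal `1/f` is the derivative of `H(x) = (1+α)^α (-ln x)^{-α}`,
which increases from `H(0⁺) = 0` to `H(e^{-1-α}) = 1`, while `1/f = 0` beyond `e^{-1-α}`;
hence `∫₀¹ 1/f = 1`. The superlevel sets of the decreasing function `1/f` are initial segments
of `[0,1]`, and a p-test gives each initial segment at most its Lebesgue measure, so by the
layer-cake formula `∫ 1/f(p) dP ≤ ∫₀¹ 1/f = 1`. With `u = -ln x`, monotonicity of `f` is the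
decrease of `e^{-u} u^{1+α}` for `u ≥ 1+α`. Finally `f` is lower semicontinuous from the left,
so an increasing `g ≤ f` with `g(x₀) < f(x₀)` stays strictly below `f` on a left neighbourhood
of `x₀`, forcing `∫₀¹ 1/g > ∫₀¹ 1/f = 1`.
-/

open Set Filter Topology

theorem volume_Ioi_inter_ofReal_lt (c : ℝ≥0∞) :
    volume (Ioi (0 : ℝ) ∩ {t | ENNReal.ofReal t < c}) = c := by
  rcases eq_or_ne c ∞ with rfl | hc
  · simp
  · have : Ioi (0 : ℝ) ∩ {t | ENNReal.ofReal t < c} = Ioo 0 c.toReal := by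
      ext t
      simp only [mem_inter_iff, mem_Ioi, mem_ofPred_eq, mem_Ioo, and_congr_right_iff]
      intro ht
      exact ENNReal.ofReal_lt_iff_lt_toReal ht.le hc
    simp [this, hc]

theorem lintegral_eq_lintegral_meas_ofReal_lt {α : Type*} [MeasurableSpace α] (μ : Measure α)
    [SFinite μ] {f : α → ℝ≥0∞} (hf : Measurable f) :
    ∫⁻ a, f a ∂μ = ∫⁻ t in Ioi (0 : ℝ), μ {a | ENNReal.ofReal t < f a} := by
  have hset : MeasurableSet {q : α × ℝ | ENNReal.ofReal q.2 < f q.1} :=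
    measurableSet_lt (ENNReal.measurable_ofReal.comp measurable_snd) (hf.comp measurable_fst)
  calc ∫⁻ a, f a ∂μ
      = ∫⁻ a, (∫⁻ t in Ioi (0 : ℝ), {t | ENNReal.ofReal t < f a}.indicator 1 t) ∂μ := by
        refine lintegral_congr fun a => ?_
        rw [lintegral_indicator_one (measurableSet_lt ENNReal.measurable_ofReal measurable_const),
          Measure.restrict_apply' measurableSet_Ioi, inter_comm, volume_Ioi_inter_ofReal_lt]
    _ = ∫⁻ t in Ioi (0 : ℝ), ∫⁻ a, {a | ENNReal.ofReal t < f a}.indicator 1 a ∂μ :=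
        lintegral_lintegral_swap (f := fun a t => {t | ENNReal.ofReal t < f a}.indicator 1 t)
          (measurable_one.indicator hset).aemeasurable
    _ = ∫⁻ t in Ioi (0 : ℝ), μ {a | ENNReal.ofReal t < f a} := by
        refine lintegral_congr fun t => ?_
        exact lintegral_indicator_one (measurableSet_lt measurable_const hf)

theorem lintegral_le_lintegral_of_meas_lt_le {α β : Type*} [MeasurableSpace α]
    [MeasurableSpace β] {μ : Measure α} {ν : Measure β} [SFinite μ] [SFinite ν]
    {f : α → ℝ≥0∞} {g : β → ℝ≥0∞} (hf : Measurable f) (hg : Measurable g)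
    (h : ∀ c, μ {a | c < f a} ≤ ν {b | c < g b}) :
    ∫⁻ a, f a ∂μ ≤ ∫⁻ b, g b ∂ν := by
  rw [lintegral_eq_lintegral_meas_ofReal_lt μ hf, lintegral_eq_lintegral_meas_ofReal_lt ν hg]
  exact lintegral_mono fun t => h _

def IsPTest {Ω : Type*} [MeasurableSpace Ω] (P : Measure Ω) (p : Ω → ℝ) : Prop :=
  (∀ ω, p ω ∈ Icc (0 : ℝ) 1) ∧ ∀ δ ∈ Icc (0 : ℝ) 1, P {ω | p ω ≤ δ} ≤ ENNReal.ofReal δ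

namespace IsPTest

variable {Ω : Type*} [MeasurableSpace Ω] {P : Measure Ω} {p : Ω → ℝ}

theorem measure_preimage_le_volume (hp : IsPTest P p) {S : Set ℝ} (hS : S ⊆ Icc 0 1)
    (hdown : ∀ x ∈ S, ∀ y ∈ Icc 0 x, y ∈ S) : P (p ⁻¹' S) ≤ volume S := by
  rcases S.eq_empty_or_nonempty with rfl | hne
  · simp
  have hbdd : BddAbove S := bddAbove_Icc.mono hS
  obtain ⟨y, hy⟩ := hne
  have hs : sSup S ∈ Icc (0 : ℝ) 1 :=
    ⟨(hS hy).1.trans (le_csSup hbdd hy), csSup_le ⟨y, hy⟩ fun x hx => (hS hx).2⟩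
  calc P (p ⁻¹' S) ≤ P {ω | p ω ≤ sSup S} := measure_mono fun ω hω => le_csSup hbdd hω
    _ ≤ ENNReal.ofReal (sSup S) := hp.2 _ hs
    _ = volume (Ioo 0 (sSup S)) := by simp
    _ ≤ volume S := measure_mono fun z hz => by
        obtain ⟨w, hw, hzw⟩ := exists_lt_of_lt_csSup ⟨y, hy⟩ hz.2
        exact hdown w hw z ⟨hz.1.le, hzw.le⟩

theorem lintegral_comp_le [SFinite P] (hp : IsPTest P p) (hpm : Measurable p)
    {φ : ℝ → ℝ≥0∞} (hφ : AntitoneOn φ (Icc 0 1)) (hφm : Measurable φ) :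
    ∫⁻ ω, φ (p ω) ∂P ≤ ∫⁻ x in Icc 0 1, φ x := by
  refine lintegral_le_lintegral_of_meas_lt_le (hφm.comp hpm) hφm fun c => ?_
  rw [Measure.restrict_apply' measurableSet_Icc]
  convert hp.measure_preimage_le_volume inter_subset_right ?_ using 2
  · ext ω; simp [hp.1 ω]
  · rintro x ⟨hcx, hx⟩ y hy
    have hy' : y ∈ Icc (0 : ℝ) 1 := ⟨hy.1, hy.2.trans hx.2⟩
    exact ⟨hcx.trans_le (hφ hy' hx hy.2), hy'⟩

end IsPTest

theorem setLIntegral_inv_lt_of_lt {f g : ℝ → ℝ≥0∞} {a b x₀ : ℝ} (hg : MonotoneOn g (Icc a b))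
    (hgf : ∀ x ∈ Icc a b, g x ≤ f x) (hx₀ : x₀ ∈ Ioc a b) (hlt : g x₀ < f x₀)
    (hf : LowerSemicontinuousWithinAt f (Iio x₀) x₀) (hfin : ∫⁻ x in Icc a b, (f x)⁻¹ ≠ ∞) :
    ∫⁻ x in Icc a b, (f x)⁻¹ < ∫⁻ x in Icc a b, (g x)⁻¹ := by
  obtain ⟨c, hgc, hcf⟩ := exists_between hlt
  obtain ⟨l, hl, hsub⟩ := mem_nhdsLT_iff_exists_Ioo_subset.1 (hf c hcf)
  have hgap : Ioo (max a l) x₀ ⊆ {x | (f x)⁻¹ ≠ (g x)⁻¹} ∩ Icc a b := fun x hx => by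
    have hxI : x ∈ Icc a b := ⟨(le_max_left a l).trans hx.1.le, hx.2.le.trans hx₀.2⟩
    have hgx : g x < f x :=
      (hg hxI ⟨hx₀.1.le, hx₀.2⟩ hx.2.le).trans_lt
        (hgc.trans (hsub ⟨(le_max_right a l).trans_lt hx.1, hx.2⟩))
    exact ⟨(ENNReal.inv_lt_inv.2 hgx).ne, hxI⟩
  refine lintegral_strict_mono_of_ae_le_of_frequently_ae_lt
    (aemeasurable_restrict_of_monotoneOn measurableSet_Icc hg).inv hfin ?_ ?_
  · exact (ae_restrict_iff' measurableSet_Icc).2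
      (Eventually.of_forall fun x hx => ENNReal.inv_le_inv.2 (hgf x hx))
  · rw [frequently_ae_iff, Measure.restrict_apply' measurableSet_Icc]
    refine (lt_of_lt_of_le ?_ (measure_mono hgap)).ne'
    simpa using max_lt hx₀.1 hl

theorem antitoneOn_exp_neg_mul_rpow {β : ℝ} (hβ : 0 < β) :
    AntitoneOn (fun u => Real.exp (-u) * u ^ β) (Ici β) := by
  intro u hu v hv huv
  have hu0 : 0 < u := hβ.trans_le hu
  have hvu : 1 ≤ v / u := (one_le_div hu0).2 huv
  have hlog : Real.log (v / u) * β ≤ (v / u - 1) * u := calc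
    Real.log (v / u) * β ≤ Real.log (v / u) * u :=
      mul_le_mul_of_nonneg_left hu (Real.log_nonneg hvu)
    _ ≤ (v / u - 1) * u :=
      mul_le_mul_of_nonneg_right (Real.log_le_sub_one_of_pos (by positivity)) hu0.le
  have hratio : (v / u) ^ β ≤ Real.exp (v - u) := calc
    (v / u) ^ β = Real.exp (Real.log (v / u) * β) := Real.rpow_def_of_pos (by positivity) _
    _ ≤ Real.exp ((v / u - 1) * u) := Real.exp_le_exp.2 hlog
    _ = Real.exp (v - u) := by congr 1; field_simp
  calc Real.exp (-v) * v ^ β = Real.exp (-v) * (u ^ β * (v / u) ^ β) := by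
        rw [← Real.mul_rpow hu0.le (by positivity), mul_div_cancel₀ _ hu0.ne']
    _ ≤ Real.exp (-v) * (u ^ β * Real.exp (v - u)) := by gcongr
    _ = Real.exp (-v + (v - u)) * u ^ β := by rw [Real.exp_add]; ring
    _ = Real.exp (-u) * u ^ β := by ring_nf

theorem le_neg_log_of_le_exp_neg {a x : ℝ} (hx : 0 < x) (h : x ≤ Real.exp (-a)) :
    a ≤ -Real.log x := by
  linarith [(Real.log_le_iff_le_exp hx).2 h]

noncomputable def logCalibratorReal (α x : ℝ) : ℝ :=
  α⁻¹ * (1 + α) ^ (-α) * x * (Real.log (1 / x)) ^ (1 + α)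

section logCalibrator

variable {α x : ℝ}

theorem logCalibrator_of_le (hx : x ≤ Real.exp (-(1 + α))) :
    logCalibrator α x = ENNReal.ofReal (logCalibratorReal α x) :=
  if_pos hx

theorem logCalibrator_of_lt (hx : Real.exp (-(1 + α)) < x) : logCalibrator α x = ∞ :=
  if_neg hx.not_ge

theorem logCalibrator_zero : logCalibrator α 0 = 0 := by
  simp [logCalibrator_of_le (Real.exp_pos _).le, logCalibratorReal]

theorem logCalibratorReal_eq_exp_neg_log (hx : 0 < x) :
    logCalibratorReal α x =
      α⁻¹ * (1 + α) ^ (-α) * (Real.exp (-(-Real.log x)) * (-Real.log x) ^ (1 + α)) := by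
  rw [neg_neg, Real.exp_log hx, logCalibratorReal, one_div, Real.log_inv, mul_assoc]

theorem logCalibratorReal_pos (hα : 0 < α) (hx : 0 < x) (hxθ : x ≤ Real.exp (-(1 + α))) :
    0 < logCalibratorReal α x := by
  have hL : 0 < -Real.log x := by linarith [le_neg_log_of_le_exp_neg hx hxθ]
  rw [logCalibratorReal_eq_exp_neg_log hx]
  positivity

theorem logCalibratorReal_monotoneOn (hα : 0 < α) :
    MonotoneOn (logCalibratorReal α) (Icc 0 (Real.exp (-(1 + α)))) := by
  rintro x ⟨hx0, -⟩ y ⟨hy0, hyθ⟩ hxy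
  rcases hx0.eq_or_lt with rfl | hx0
  · rcases hy0.eq_or_lt with rfl | hy0
    · rfl
    · simpa [logCalibratorReal] using (logCalibratorReal_pos hα hy0 hyθ).le
  have hy0 := hx0.trans_le hxy
  rw [logCalibratorReal_eq_exp_neg_log hx0, logCalibratorReal_eq_exp_neg_log hy0]
  refine mul_le_mul_of_nonneg_left ?_ (by positivity)
  have hyβ := le_neg_log_of_le_exp_neg hy0 hyθ
  exact antitoneOn_exp_neg_mul_rpow (by linarith) hyβ
    (hyβ.trans (neg_le_neg (Real.log_le_log hx0 hxy))) (neg_le_neg (Real.log_le_log hx0 hxy))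

theorem logCalibrator_monotoneOn (hα : 0 < α) : MonotoneOn (logCalibrator α) (Ici 0) := by
  intro x hx y hy hxy
  rcases le_or_gt y (Real.exp (-(1 + α))) with hyθ | hθy
  · rw [logCalibrator_of_le (hxy.trans hyθ), logCalibrator_of_le hyθ]
    exact ENNReal.ofReal_le_ofReal
      (logCalibratorReal_monotoneOn hα ⟨hx, hxy.trans hyθ⟩ ⟨hy, hyθ⟩ hxy)
  · rw [logCalibrator_of_lt hθy]
    exact le_top

theorem measurable_logCalibrator : Measurable (logCalibrator α) := by
  unfold logCalibrator
  exact Measurable.ite measurableSet_Iic (by fun_prop) measurable_const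

theorem lowerSemicontinuousWithinAt_logCalibrator (hα : 0 < α) (hx : 0 < x) :
    LowerSemicontinuousWithinAt (logCalibrator α) (Iio x) x := by
  rcases le_or_gt x (Real.exp (-(1 + α))) with hxθ | hθx
  · have hcont : ContinuousAt (logCalibratorReal α) x := by
      unfold logCalibratorReal
      fun_prop (disch := first | positivity | (right; linarith))
    refine ContinuousWithinAt.lowerSemicontinuousWithinAt ?_
    exact (ENNReal.continuous_ofReal.continuousAt.comp hcont).continuousWithinAt.congr
      (fun y hy => logCalibrator_of_le (hy.le.trans hxθ)) (logCalibrator_of_le hxθ)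
  · intro c hc
    filter_upwards [Ioo_mem_nhdsLT hθx] with y hy
    rw [logCalibrator_of_lt hy.1]
    rwa [logCalibrator_of_lt hθx] at hc

end logCalibrator

noncomputable def invLogCalibratorPrimitive (α x : ℝ) : ℝ :=
  (1 + α) ^ α * (-Real.log x) ^ (-α)

section primitive

variable {α : ℝ}

theorem hasDerivAt_invLogCalibratorPrimitive (hα : 0 < α) {x : ℝ} (hx0 : 0 < x) (hx1 : x < 1) :
    HasDerivAt (invLogCalibratorPrimitive α) (logCalibratorReal α x)⁻¹ x := by
  have hL : 0 < -Real.log x := neg_pos.2 (Real.log_neg hx0 hx1)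
  have hcomp := ((Real.hasDerivAt_rpow_const (p := -α) (Or.inl hL.ne')).comp x
    (Real.hasDerivAt_log hx0.ne').neg).const_mul ((1 + α) ^ α)
  refine hcomp.congr_deriv ?_
  rw [logCalibratorReal, one_div, Real.log_inv, show -α - 1 = -(1 + α) by ring,
    Real.rpow_neg hL.le, Real.rpow_neg (by linarith : (0 : ℝ) ≤ 1 + α)]
  have : (1 + α) ^ α ≠ 0 := (Real.rpow_pos_of_pos (by linarith) _).ne'
  field_simp

-- The conventions `log 0 = 0` and `0 ^ (-α) = 0` give `invLogCalibratorPrimitive α 0 = 0`,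
-- which is also its limit at `0⁺`.
theorem invLogCalibratorPrimitive_zero (hα : 0 < α) : invLogCalibratorPrimitive α 0 = 0 := by
  simp [invLogCalibratorPrimitive, Real.zero_rpow (neg_ne_zero.2 hα.ne')]

theorem continuousOn_invLogCalibratorPrimitive (hα : 0 < α) :
    ContinuousOn (invLogCalibratorPrimitive α) (Ico 0 1) := by
  rintro x ⟨hx0, hx1⟩
  rcases hx0.eq_or_lt with rfl | hx0
  · have hlim : Tendsto (fun x => (1 + α) ^ α * (-Real.log x) ^ (-α)) (𝓝[>] 0) (𝓝 0) := by
      simpa using ((tendsto_rpow_neg_atTop hα).comp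
        (tendsto_neg_atBot_atTop.comp Real.tendsto_log_nhdsGT_zero)).const_mul ((1 + α) ^ α)
    refine (continuousWithinAt_Ioi_iff_Ici.1 ?_).mono Ico_subset_Ici_self
    rw [ContinuousWithinAt, invLogCalibratorPrimitive_zero hα]
    exact hlim
  · exact (hasDerivAt_invLogCalibratorPrimitive hα hx0 hx1).continuousAt.continuousWithinAt

theorem invLogCalibratorPrimitive_exp (hα : 0 < α) :
    invLogCalibratorPrimitive α (Real.exp (-(1 + α))) = 1 := by
  rw [invLogCalibratorPrimitive, Real.log_exp, neg_neg, ← Real.rpow_add (by linarith)]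
  simp

end primitive

theorem lintegral_Ioc_ofReal_inv_logCalibratorReal {α : ℝ} (hα : 0 < α) :
    ∫⁻ x in Ioc 0 (Real.exp (-(1 + α))), ENNReal.ofReal (logCalibratorReal α x)⁻¹ = 1 := by
  set θ := Real.exp (-(1 + α))
  have hθ0 : 0 < θ := Real.exp_pos _
  have hθ1 : θ < 1 := Real.exp_lt_one_iff.2 (by linarith)
  have hcont := (continuousOn_invLogCalibratorPrimitive hα).mono (Icc_subset_Ico_right hθ1)
  have hderiv : ∀ x ∈ Ioo 0 θ, HasDerivAt (invLogCalibratorPrimitive α)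
      (logCalibratorReal α x)⁻¹ x :=
    fun x hx => hasDerivAt_invLogCalibratorPrimitive hα hx.1 (hx.2.trans hθ1)
  have hnonneg : ∀ x ∈ Ioc 0 θ, 0 ≤ (logCalibratorReal α x)⁻¹ :=
    fun x hx => inv_nonneg.2 (logCalibratorReal_pos hα hx.1 hx.2).le
  have hint : IntegrableOn (fun x => (logCalibratorReal α x)⁻¹) (Ioc 0 θ) :=
    intervalIntegral.integrableOn_deriv_of_nonneg hcont hderiv
      fun x hx => hnonneg x (Ioo_subset_Ioc_self hx)
  rw [← ofReal_integral_eq_lintegral_ofReal hint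
      ((ae_restrict_iff' measurableSet_Ioc).2 (Eventually.of_forall hnonneg)),
    ← intervalIntegral.integral_of_le hθ0.le,
    intervalIntegral.integral_eq_sub_of_hasDerivAt_of_le hθ0.le hcont hderiv
      ((intervalIntegrable_iff_integrableOn_Ioc_of_le hθ0.le).2 hint),
    invLogCalibratorPrimitive_exp hα, invLogCalibratorPrimitive_zero hα, sub_zero,
    ENNReal.ofReal_one]

theorem lintegral_inv_logCalibrator {α : ℝ} (hα : 0 < α) :
    ∫⁻ x in Icc 0 1, (logCalibrator α x)⁻¹ = 1 := by
  set θ := Real.exp (-(1 + α))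
  have hθ0 : 0 < θ := Real.exp_pos _
  have hθ1 : θ < 1 := Real.exp_lt_one_iff.2 (by linarith)
  calc ∫⁻ x in Icc 0 1, (logCalibrator α x)⁻¹
      = ∫⁻ x in Ioc 0 1, (logCalibrator α x)⁻¹ := (setLIntegral_congr Ioc_ae_eq_Icc).symm
    _ = (∫⁻ x in Ioc 0 θ, (logCalibrator α x)⁻¹) + ∫⁻ x in Ioc θ 1, (logCalibrator α x)⁻¹ := by
      rw [← Ioc_union_Ioc_eq_Ioc hθ0.le hθ1.le,
        lintegral_union measurableSet_Ioc (Ioc_disjoint_Ioc_of_le le_rfl)]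
    _ = (∫⁻ x in Ioc 0 θ, ENNReal.ofReal (logCalibratorReal α x)⁻¹) + ∫⁻ x in Ioc θ 1, 0 := by
      congr 1 <;> refine setLIntegral_congr_fun measurableSet_Ioc fun x hx => ?_
      · rw [logCalibrator_of_le hx.2,
          ← ENNReal.ofReal_inv_of_pos (logCalibratorReal_pos hα hx.1 hx.2)]
      · rw [logCalibrator_of_lt hx.1, inv_top]
    _ = 1 := by rw [lintegral_zero, add_zero, lintegral_Ioc_ofReal_inv_logCalibratorReal hα]

/-- For every `α > 0`, `logCalibrator α` is an admissible calibrator: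
it is increasing on `[0,1]`, no calibrator strictly dominates it, for every probability
space and every p-test `p` on it `∫ (1/f(p)) dP ≤ 1`, and `∫₀¹ (1/f(x)) dx = 1`. -/
theorem logCalibrator_is_admissible_calibrator (α : ℝ) (hα : 0 < α) :
    MonotoneOn (logCalibrator α) (Set.Icc (0 : ℝ) 1) ∧
    (¬ ∃ g : ℝ → ℝ≥0∞,
        MonotoneOn g (Set.Icc (0 : ℝ) 1) ∧
        (∫⁻ x in Set.Icc (0 : ℝ) 1, (g x)⁻¹ ≤ 1) ∧
        (∀ x ∈ Set.Icc (0 : ℝ) 1, g x ≤ logCalibrator α x) ∧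
        (∃ x ∈ Set.Icc (0 : ℝ) 1, g x < logCalibrator α x)) ∧
    (∀ (Ω : Type) (m : MeasurableSpace Ω) (P : Measure Ω),
      IsProbabilityMeasure P →
      ∀ p : Ω → ℝ, Measurable p → (∀ ω, p ω ∈ Set.Icc (0 : ℝ) 1) →
      (∀ δ ∈ Set.Icc (0 : ℝ) 1, P {ω | p ω ≤ δ} ≤ ENNReal.ofReal δ) →
      ∫⁻ ω, (logCalibrator α (p ω))⁻¹ ∂P ≤ 1) ∧
    ∫⁻ x in Set.Icc (0 : ℝ) 1, (logCalibrator α x)⁻¹ = 1 := by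
  have hf1 := lintegral_inv_logCalibrator hα
  refine ⟨(logCalibrator_monotoneOn hα).mono Icc_subset_Ici_self, ?_, ?_, hf1⟩
  · rintro ⟨g, hg, hg1, hgf, x₀, hx₀, hlt⟩
    have hx₀pos : 0 < x₀ :=
      hx₀.1.lt_of_ne (by rintro rfl; simp [logCalibrator_zero] at hlt)
    have hlt1 := setLIntegral_inv_lt_of_lt hg hgf ⟨hx₀pos, hx₀.2⟩ hlt
      (lowerSemicontinuousWithinAt_logCalibrator hα hx₀pos) (by simp [hf1])
    exact (hf1 ▸ hlt1).not_ge hg1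
  · intro Ω _ P _ p hp hp01 hptest
    calc ∫⁻ ω, (logCalibrator α (p ω))⁻¹ ∂P ≤ ∫⁻ x in Icc 0 1, (logCalibrator α x)⁻¹ :=
          IsPTest.lintegral_comp_le ⟨hp01, hptest⟩ hp
            (fun x hx y hy hxy => ENNReal.inv_le_inv.2
              (logCalibrator_monotoneOn hα hx.1 hy.1 hxy))
            measurable_logCalibrator.inv
      _ = 1 := hf1
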